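/- The language L₂ = {0ᵐ1ⁿ0ⁿ | m, n ≥ 1} over the alphabet {0,1} is truth-table reducible by a Mealy machine to L_# = {0ⁿ1ⁿ | n ≥ 1}; that is, L₂ ≤^A L_#. -/

import Mathlib

/-- A Mealy machine with oracle: finite state set `Q`, start state `q0`,
partial transition function `step`, output function `out`, and for each state `q`
a tuple of `numSuf q` query suffixes `suf q` together with a truth table `tt q`. -/
structure OracleMealy (α : Type) (β : Type) where
  Q : Type
  [fintypeQ : Fintype Q]
  q0 : Q
  step : Q → α → Option Q
  out : Q → α → List β
  numSuf : Q → ℕ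
  suf : (q : Q) → Fin (numSuf q) → List β
  tt : (q : Q) → (Fin (numSuf q) → Bool) → Bool

namespace OracleMealy

variable {α β : Type}

/-- Running the machine on input `w` from the start state, returning the final state
together with the string written on the oracle tape (`none` if a transition is undefined). -/
def run (M : OracleMealy α β) (w : List α) : Option (M.Q × List β) :=
  w.foldl
    (fun s a => s.bind fun qo => (M.step qo.1 a).map fun q' => (q', qo.2 ++ M.out qo.1 a))
    (some (M.q0, []))

open Classical in
/-- The machine `M` with oracle `L` accepts `w` iff the run on `w` is defined, ending in a
state `p` with output `o`, and the truth table of `p` applied to the answers of the oracle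
queries `o ++ M.suf p i ∈ L` yields `true`. -/
def Accepts (M : OracleMealy α β) (L : Set (List β)) (w : List α) : Prop :=
  ∃ p o, M.run w = some (p, o) ∧
    M.tt p (fun i => decide (o ++ M.suf p i ∈ L)) = true

end OracleMealy

/-- `L₁ ≤^A L₂`: truth-table reducibility by Mealy machines. -/
def MealyTTReducible (L₁ : Set (List α)) (L₂ : Set (List β)) : Prop :=
  ∃ M : OracleMealy α β, ∀ w : List α, w ∈ L₁ ↔ M.Accepts L₂ w

/-- The language `L_# = {0^n 1^n | n ≥ 1}` over the alphabet `{0,1}` (`false` = 0, `true` = 1). -/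
def Lsharp : Set (List Bool) :=
  {w | ∃ n : ℕ, 1 ≤ n ∧ w = List.replicate n false ++ List.replicate n true}

/-- The language `L₂ = {0ᵐ1ⁿ0ⁿ | m, n ≥ 1}` over `{0,1}`. -/
def Ltwo : Set (List Bool) :=
  {w | ∃ m n : ℕ, 1 ≤ m ∧ 1 ≤ n ∧
    w = List.replicate m false ++ List.replicate n true ++ List.replicate n false}

/-! On input `0ᵐ1ⁿ0ᵏ` the reducing machine ignores the leading zeros, writes a `0` for every `1`
and a `1` for every trailing `0`, and so leaves `0ⁿ1ᵏ` on the oracle tape; a single query with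
empty suffix then tests `n = k`, accepting only in the state for the trailing zeros. Conversely,
a state invariant pins down, for every state, the inputs that reach it and what they have
written, so an accepted input has this shape. -/

namespace OracleMealy

variable {α β : Type} (M : OracleMealy α β)

theorem run_append_singleton (w : List α) (a : α) :
    M.run (w ++ [a]) =
      (M.run w).bind fun c => (M.step c.1 a).map fun q' => (q', c.2 ++ M.out c.1 a) := by
  simp only [run, List.foldl_append, List.foldl_cons, List.foldl_nil]

theorem run_append_singleton_of_step {w : List α} {q q' : M.Q} {o : List β} {a : α}
    (hrun : M.run w = some (q, o)) (hstep : M.step q a = some q') :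
    M.run (w ++ [a]) = some (q', o ++ M.out q a) := by
  simp [run_append_singleton, hrun, hstep]

theorem run_append_replicate {w : List α} {q q' : M.Q} {o u : List β} {a : α}
    (hrun : M.run w = some (q, o)) (henter : M.step q a = some q') (hloop : M.step q' a = some q')
    (hout : M.out q a = u) (hout' : M.out q' a = u) {k : ℕ} (hk : 1 ≤ k) :
    M.run (w ++ List.replicate k a) = some (q', o ++ (List.replicate k u).flatten) := by
  induction k, hk using Nat.le_induction with
  | base => simp [M.run_append_singleton_of_step hrun henter, hout]
  | succ k _ ih =>
    rw [List.replicate_succ', ← List.append_assoc, M.run_append_singleton_of_step ih hloop]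
    simp [List.replicate_succ', hout']

theorem run_induction (P : M.Q → List α → List β → Prop) (hinit : P M.q0 [] [])
    (hstep : ∀ q q' w o a, P q w o → M.step q a = some q' → P q' (w ++ [a]) (o ++ M.out q a))
    {w : List α} {p : M.Q} {o : List β} (hrun : M.run w = some (p, o)) : P p w o := by
  induction w using List.reverseRecOn generalizing p o with
  | nil =>
    obtain ⟨rfl, rfl⟩ : M.q0 = p ∧ ([] : List β) = o := by simpa [run] using hrun
    exact hinit
  | append_singleton w a ih =>
    rw [run_append_singleton] at hrun
    obtain ⟨⟨q, o'⟩, hw, hq⟩ := Option.bind_eq_some_iff.mp hrun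
    obtain ⟨q', hq', hc⟩ := Option.map_eq_some_iff.mp hq
    obtain ⟨rfl, rfl⟩ := Prod.mk.inj hc
    exact hstep q q' w o' a (ih hw) hq'

end OracleMealy

theorem eq_of_replicate_append_replicate_mem_Lsharp {n k : ℕ}
    (h : List.replicate n false ++ List.replicate k true ∈ Lsharp) : n = k := by
  obtain ⟨j, -, heq⟩ := h
  have hzeros := congrArg (List.count false) heq
  have hones := congrArg (List.count true) heq
  simp [List.count_replicate] at hzeros hones
  omega

namespace Ltwo

inductive State
  | init | lead | ones | trail
  deriving DecidableEq

open State

instance : Fintype State := ⟨{init, lead, ones, trail}, fun q => by cases q <;> simp⟩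

def machine : OracleMealy Bool Bool where
  Q := State
  q0 := init
  step
    | init, false | lead, false => some lead
    | lead, true | ones, true => some ones
    | ones, false | trail, false => some trail
    | _, _ => none
  out
    | _, true => [false]
    | ones, false | trail, false => [true]
    | _, _ => []
  numSuf _ := 1
  suf _ _ := []
  tt
    | trail, f => f 0
    | _, _ => false

def Reachable : State → List Bool → List Bool → Prop
  | init, w, o => w = [] ∧ o = []
  | lead, w, o => (∃ m, 1 ≤ m ∧ w = List.replicate m false) ∧ o = []
  | ones, w, o => ∃ m n, 1 ≤ m ∧ 1 ≤ n ∧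
      w = List.replicate m false ++ List.replicate n true ∧ o = List.replicate n false
  | trail, w, o => ∃ m n k, 1 ≤ m ∧ 1 ≤ n ∧ 1 ≤ k ∧
      w = List.replicate m false ++ List.replicate n true ++ List.replicate k false ∧
      o = List.replicate n false ++ List.replicate k true

theorem reachable_step {q q' : State} {w o : List Bool} {a : Bool} (hq : Reachable q w o)
    (hstep : machine.step q a = some q') :
    Reachable q' (w ++ [a]) (o ++ machine.out q a) := by
  cases q <;> cases a <;> simp only [machine] at hstep <;> cases hstep
  · obtain ⟨rfl, rfl⟩ := hq
    exact ⟨⟨1, le_rfl, rfl⟩, rfl⟩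
  · obtain ⟨⟨m, hm, rfl⟩, rfl⟩ := hq
    exact ⟨⟨m + 1, by omega, List.replicate_succ'.symm⟩, rfl⟩
  · obtain ⟨⟨m, hm, rfl⟩, rfl⟩ := hq
    exact ⟨m, 1, hm, le_rfl, rfl, rfl⟩
  · obtain ⟨m, n, hm, hn, rfl, rfl⟩ := hq
    exact ⟨m, n, 1, hm, hn, le_rfl, rfl, rfl⟩
  · obtain ⟨m, n, hm, hn, rfl, rfl⟩ := hq
    exact ⟨m, n + 1, hm, by omega, by simp [List.replicate_succ'], List.replicate_succ'.symm⟩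
  · obtain ⟨m, n, k, hm, hn, hk, rfl, rfl⟩ := hq
    exact ⟨m, n, k + 1, hm, hn, by omega, by simp [List.replicate_succ'],
      by simp [List.replicate_succ', machine]⟩

theorem reachable_of_run {w o : List Bool} {p : State} (h : machine.run w = some (p, o)) :
    Reachable p w o :=
  machine.run_induction Reachable ⟨rfl, rfl⟩ (fun _ _ _ _ _ => reachable_step) h

theorem run_replicate {m n k : ℕ} (hm : 1 ≤ m) (hn : 1 ≤ n) (hk : 1 ≤ k) :
    machine.run (List.replicate m false ++ List.replicate n true ++ List.replicate k false) =
      some (trail, List.replicate n false ++ List.replicate k true) := by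
  have hlead := machine.run_append_replicate (w := []) (q := init) (q' := lead) (a := false)
    (u := []) rfl rfl rfl rfl rfl hm
  have hones := machine.run_append_replicate hlead (a := true) (u := [false]) rfl rfl rfl rfl hn
  have htrail := machine.run_append_replicate hones (a := false) (u := [true]) rfl rfl rfl rfl hk
  simp only [List.nil_append, List.flatten_replicate_nil, List.flatten_replicate_singleton]
    at htrail
  exact htrail

open Classical in
theorem accepts_iff {L : Set (List Bool)} {w : List Bool} :
    machine.Accepts L w ↔ ∃ o, machine.run w = some (trail, o) ∧ o ∈ L := by
  constructor
  · rintro ⟨p, o, hrun, hacc⟩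
    cases p <;> simp only [machine, Bool.false_eq_true] at hacc
    exact ⟨o, hrun, by simpa using of_decide_eq_true hacc⟩
  · rintro ⟨o, hrun, ho⟩
    exact ⟨trail, o, hrun, decide_eq_true (by simpa [machine] using ho)⟩

end Ltwo

/-- `L₂ = {0ᵐ1ⁿ0ⁿ | m, n ≥ 1}` is truth-table reducible by a Mealy machine to `L_#`. -/
theorem Ltwo_mealyTTReducible_Lsharp : MealyTTReducible Ltwo Lsharp := by
  refine ⟨Ltwo.machine, fun w => ?_⟩
  rw [Ltwo.accepts_iff]
  constructor
  · rintro ⟨m, n, hm, hn, rfl⟩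
    exact ⟨_, Ltwo.run_replicate hm hn hn, n, hn, rfl⟩
  · rintro ⟨o, hrun, ho⟩
    obtain ⟨m, n, k, hm, hn, -, rfl, rfl⟩ := Ltwo.reachable_of_run hrun
    obtain rfl := eq_of_replicate_append_replicate_mem_Lsharp ho
    exact ⟨m, n, hm, hn, rfl⟩
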